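/- Let q be a prime power and let B be an (mμ) × (mn) matrix over F_q. If ℒ is the set of ALL bijective F_q-linear maps on F_q^{mn} and L is uniformly distributed on ℒ, then the family of functions { x ↦ BLx : L ∈ ℒ } is a family of two-universal hash functions from F_q^{mn} to im(B); that is, for all x1 ≠ x2 in F_q^{mn}, Pr_L[ BLx1 = BLx2 ] ≤ 1/|im(B)| = q^{−rank(B)}. -/

import Mathlib

/-!
Put `v = x1 - x2 ≠ 0`. Since `GL` acts transitively on the nonzero vectors and, by
orbit–stabilizer, every fibre of `L ↦ L v` is a coset of the stabilizer of `v`, the vector `L v`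
is uniformly distributed on the `q ^ (mn) - 1` nonzero vectors. Hence
`Pr[B L v = 0] = (|ker B| - 1) / (q ^ (mn) - 1) ≤ |ker B| / q ^ (mn) = 1 / |im B|`.
-/

open Matrix MulAction

theorem Nat.mul_le_of_mul_sub_one_eq {a r c N : ℕ} (hr : 0 < r) (har : 2 ≤ a * r)
    (h : c * (a * r - 1) = (a - 1) * N) : c * r ≤ N := by
  refine Nat.le_of_mul_le_mul_right ?_ (by omega : 0 < a * r - 1)
  calc c * r * (a * r - 1) = r * (a - 1) * N := by
        rw [mul_right_comm, h]; ring
    _ ≤ (a * r - 1) * N := by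
        gcongr
        rw [Nat.mul_sub_one, mul_comm]
        omega
    _ = N * (a * r - 1) := mul_comm _ _

namespace MulAction

variable {G X : Type*} [Group G] [MulAction G X]

theorem orbitProdStabilizerEquivGroup_symm_apply_fst (x : X) (g : G) :
    (((orbitProdStabilizerEquivGroup G x).symm g).1 : X) = g • x := by
  simp [orbitProdStabilizerEquivGroup, Subgroup.groupEquivQuotientProdSubgroup]

theorem ncard_smul_mem_eq (x : X) (s : Set X) :
    {g : G | g • x ∈ s}.ncard = (orbit G x ∩ s).ncard * Nat.card (stabilizer G x) := by
  have e : {g : G | g • x ∈ s} ≃ {y : orbit G x // (y : X) ∈ s} × stabilizer G x :=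
    ((orbitProdStabilizerEquivGroup G x).symm.subtypeEquiv fun g => by
        rw [orbitProdStabilizerEquivGroup_symm_apply_fst]; rfl).trans
      Equiv.prodSubtypeFstEquivSubtypeProd
  rw [← Nat.card_coe_set_eq, Nat.card_congr e, Nat.card_prod, ← Nat.card_coe_set_eq,
    Nat.card_congr (Equiv.subtypeSubtypeEquivSubtypeInter _ _)]
  rfl

theorem ncard_smul_mem_mul_ncard_orbit (x : X) (s : Set X) :
    {g : G | g • x ∈ s}.ncard * (orbit G x).ncard = (orbit G x ∩ s).ncard * Nat.card G := by
  rw [ncard_smul_mem_eq, mul_assoc, ← index_stabilizer, Subgroup.card_mul_index]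

end MulAction

theorem LinearEquiv.exists_apply_eq_of_ne_zero {K V : Type*} [Field K] [AddCommGroup V]
    [Module K V] [FiniteDimensional K V] {v w : V} (hv : v ≠ 0) (hw : w ≠ 0) :
    ∃ e : V ≃ₗ[K] V, e v = w := by
  obtain ⟨e, he⟩ := Submodule.exists_linearEquiv_restrict_eq
    ((coord K V v hv).trans (toSpanNonzeroSingleton K V w hw))
  refine ⟨e, ?_⟩
  rw [← he ⟨v, Submodule.mem_span_singleton_self v⟩]
  simp [coord_self]

theorem LinearMap.natCard_ker_mul_natCard_range {K V W : Type*} [Field K] [Finite K]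
    [AddCommGroup V] [Module K V] [FiniteDimensional K V] [AddCommGroup W] [Module K W]
    (f : V →ₗ[K] W) :
    Nat.card (ker f) * Nat.card (range f) = Nat.card V := by
  rw [Module.natCard_eq_pow_finrank (K := K) (V := ker f),
    Module.natCard_eq_pow_finrank (K := K) (V := range f),
    Module.natCard_eq_pow_finrank (K := K) (V := V), ← pow_add, add_comm,
    finrank_range_add_finrank_ker]

namespace Matrix.GeneralLinearGroup

variable {n K : Type*} [Fintype n] [DecidableEq n] [Field K]

theorem orbit_eq_compl_zero {v : n → K} (hv : v ≠ 0) : orbit (GL n K) v = {0}ᶜ := by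
  ext w
  refine ⟨fun ⟨g, hg⟩ => hg ▸ (smul_ne_zero_iff_ne g).mpr hv, fun hw => ?_⟩
  obtain ⟨e, he⟩ := LinearEquiv.exists_apply_eq_of_ne_zero (K := K) hv hw
  refine ⟨toLin.symm (LinearMap.GeneralLinearGroup.ofLinearEquiv e), ?_⟩
  change (_ : Matrix n n K) *ᵥ v = w
  rw [← mulVecLin_apply, ← toLin_apply]
  simpa using he

theorem ncard_smul_mem_mul_eq [Finite K] {v : n → K} (hv : v ≠ 0) (p : Submodule K (n → K)) :
    {g : GL n K | g • v ∈ p}.ncard * (Nat.card (n → K) - 1)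
      = (Nat.card p - 1) * Nat.card (GL n K) := by
  have := ncard_smul_mem_mul_ncard_orbit (G := GL n K) v p
  rwa [orbit_eq_compl_zero hv, Set.ncard_compl, Set.ncard_singleton, Set.inter_comm,
    ← Set.sdiff_eq, Set.ncard_sdiff_singleton_of_mem p.zero_mem] at this

end Matrix.GeneralLinearGroup

namespace Matrix

variable {m n K : Type*} [Fintype n] [Field K]

theorem ncard_range_mulVec_eq_natCard (B : Matrix m n K) :
    (Set.range B.mulVec).ncard = Nat.card (LinearMap.range B.mulVecLin) := by
  rw [← coe_mulVecLin, ← LinearMap.coe_range]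
  rfl

theorem ncard_range_mulVec (B : Matrix m n K) :
    (Set.range B.mulVec).ncard = Nat.card K ^ B.rank := by
  rw [ncard_range_mulVec_eq_natCard, rank, Module.natCard_eq_pow_finrank (K := K)]

theorem ncard_mulVec_smul_eq_zero_mul_ncard_range_le [DecidableEq n] [Finite K]
    (B : Matrix m n K) {v : n → K} (hv : v ≠ 0) :
    {g : GL n K | B *ᵥ (g • v) = 0}.ncard * (Set.range B.mulVec).ncard ≤ Nat.card (GL n K) := by
  have : Nontrivial (n → K) := ⟨⟨v, 0, hv⟩⟩
  have : Finite (LinearMap.range B.mulVecLin) := Module.finite_of_finite K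
  have hsplit := LinearMap.natCard_ker_mul_natCard_range B.mulVecLin
  have hcount := GeneralLinearGroup.ncard_smul_mem_mul_eq hv (LinearMap.ker B.mulVecLin)
  rw [← hsplit] at hcount
  rw [ncard_range_mulVec_eq_natCard]
  exact Nat.mul_le_of_mul_sub_one_eq Nat.card_pos (hsplit ▸ Finite.one_lt_card) hcount

end Matrix

theorem full_GL_two_universal_general {F : Type*} [Field F] [Fintype F]
    (m n μ : ℕ)
    (B : Matrix (Fin (m * μ)) (Fin (m * n)) F)
    (x1 x2 : Fin (m * n) → F) (hne : x1 ≠ x2) :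
    (({L : GL (Fin (m * n)) F |
        B.mulVec ((L : Matrix (Fin (m * n)) (Fin (m * n)) F).mulVec x1)
          = B.mulVec ((L : Matrix (Fin (m * n)) (Fin (m * n)) F).mulVec x2)}.ncard : ℝ)
        / (Nat.card (GL (Fin (m * n)) F) : ℝ)
      ≤ 1 / ((Set.range B.mulVec).ncard : ℝ))
    ∧ 1 / ((Set.range B.mulVec).ncard : ℝ)
        = (Fintype.card F : ℝ) ^ (-(B.rank : ℤ)) := by
  have hdiff : {L : GL (Fin (m * n)) F | B *ᵥ (L *ᵥ x1) = B *ᵥ (L *ᵥ x2)}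
      = {L | B *ᵥ (L • (x1 - x2)) = 0} := by
    ext L
    simp [Units.smul_def, mulVec_sub, sub_eq_zero]
  have hrange := ncard_range_mulVec B
  rw [Nat.card_eq_fintype_card] at hrange
  refine ⟨?_, ?_⟩
  · rw [hdiff, div_le_div_iff₀ (Nat.cast_pos.mpr Nat.card_pos) (by rw [hrange]; positivity),
      one_mul]
    exact_mod_cast ncard_mulVec_smul_eq_zero_mul_ncard_range_le B (sub_ne_zero.mpr hne)
  · rw [hrange, Nat.cast_pow, _root_.zpow_neg, zpow_natCast, one_div]

/-- If `ℒ` is the set of ALL bijective linear maps on `F_q^{mn}`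
(the full general linear group) and `L` is uniform on it, then `{x ↦ BLx}` is a
family of two-universal hash functions from `F_q^{mn}` to `im(B)`: for all
`x1 ≠ x2`, `Pr_L[BLx1 = BLx2] ≤ 1/|im B|`, and `1/|im B| = q^{-rank B}`. -/
theorem full_GL_two_universal {F : Type*} [Field F] [Fintype F] [DecidableEq F]
    (m n μ : ℕ) (hm : 0 < m) (hn : 0 < n) (hμ : 0 < μ)
    (B : Matrix (Fin (m * μ)) (Fin (m * n)) F)
    (x1 x2 : Fin (m * n) → F) (hne : x1 ≠ x2) :
    (({L : GL (Fin (m * n)) F |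
        B.mulVec ((L : Matrix (Fin (m * n)) (Fin (m * n)) F).mulVec x1)
          = B.mulVec ((L : Matrix (Fin (m * n)) (Fin (m * n)) F).mulVec x2)}.ncard : ℝ)
        / (Nat.card (GL (Fin (m * n)) F) : ℝ)
      ≤ 1 / ((Set.range B.mulVec).ncard : ℝ))
    ∧ 1 / ((Set.range B.mulVec).ncard : ℝ)
        = (Fintype.card F : ℝ) ^ (-(B.rank : ℤ)) :=
  full_GL_two_universal_general m n μ B x1 x2 hne
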